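/- arXiv:math/0005004 — 2 statements merged into one kernel-verified Lean document; each statement's English description precedes it below -/
import Mathlib

section
/- Let X_1,...,X_m be i.i.d. random variables with values in a measurable space S, let s ≥ 1, and let Y : S^m → ℝ be a nonnegative symmetric function with E[Y(X_1,...,X_m)^{2s}] < ∞. Then for all 0 ≤ k, l ≤ m and n ≥ 1, n^{k+l+s(2m-k-l)} · E[(E[Y | X_1,...,X_k])^s] · E[(E[Y | X_1,...,X_l])^s] ≤ B(s,m) · max( n^{k+2s(m-k)} E[(E[Y | X_1,...,X_k])^{2s}], n^{l+2s(m-l)} E[(E[Y | X_1,...,X_l])^{2s}], n^{2sm} (E[Y])^{2s} ), where Y denotes Y(X_1,...,X_m) and B(s,m) depends only on s and m. -/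
/-!
Write `g_j = E[Y | X_1, …, X_j]`. By conditional Jensen `g_j` has a finite `2s`-th moment, and
`E g_j = E Y`. Hölder's inequality interpolating between `L¹` and `L^{2s}`, with
`θ = (s - 1) / (2s - 1)` chosen so that `s = θ · 2s + (1 - θ) · 1`, gives
`E g_j^s ≤ (E g_j^{2s})^θ (E Y)^{1-θ}`. The powers of `n` split in the same proportions, so the
left-hand side is at most the weighted geometric mean `A_k^θ A_l^θ C^{(1-θ)/s}` of the three
terms `A_k, A_l, C` on the right; its weights sum to `1`, so it is at most their maximum and
`B = 1` works.
-/

open MeasureTheory ProbabilityTheory Finset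

/-- The symmetric statistic `T_n = Σ_{1 ≤ i_1 < ... < i_m ≤ n} Y(X_{i_1},...,X_{i_m})`,
where the sum ranges over strictly increasing index tuples. -/
noncomputable def symStat {Ω S : Type*} {n m : ℕ} (X : Fin n → Ω → S)
    (Y : (Fin m → S) → ℝ) (ω : Ω) : ℝ :=
  ∑ g ∈ Finset.univ.filter (fun g : Fin m → Fin n => ∀ a b : Fin m, a < b → g a < g b),
    Y (fun j => X (g j) ω)

/-- The σ-algebra `σ(X_i : I i)` generated by a subfamily of random variables. -/
def sigmaOf {Ω S ι : Type*} [MeasurableSpace S] (X : ι → Ω → S) (I : ι → Prop) :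
    MeasurableSpace Ω :=
  ⨆ i, ⨆ _ : I i, MeasurableSpace.comap (X i) inferInstance

theorem Real.rpow_mul_rpow_mul_rpow_le_max {x y z a b c : ℝ} (hx : 0 ≤ x) (hy : 0 ≤ y)
    (hz : 0 ≤ z) (ha : 0 ≤ a) (hb : 0 ≤ b) (hc : 0 ≤ c) (habc : a + b + c = 1) :
    x ^ a * y ^ b * z ^ c ≤ max x (max y z) := by
  set M := max x (max y z)
  calc x ^ a * y ^ b * z ^ c ≤ a * x + b * y + c * z :=
        Real.geom_mean_le_arith_mean3_weighted ha hb hc hx hy hz habc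
    _ ≤ a * M + b * M + c * M := by
        gcongr
        · exact le_max_left _ _
        · exact (le_max_left _ _).trans (le_max_right _ _)
        · exact (le_max_right _ _).trans (le_max_right _ _)
    _ = M := by rw [← add_mul, ← add_mul, habc, one_mul]

section Interpolation

variable {α : Type*} [MeasurableSpace α] {μ : Measure α} {g : α → ℝ}

theorem memLp_rpow_mul_of_integrable_rpow (hg : 0 ≤ᵐ[μ] g) (hgm : AEStronglyMeasurable g μ)
    {p t : ℝ} (ht : 0 < t) (hgp : Integrable (fun x => g x ^ p) μ) :
    MemLp (fun x => g x ^ (t * p)) (ENNReal.ofReal t⁻¹) μ := by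
  have hm : AEStronglyMeasurable (fun x => g x ^ (t * p)) μ :=
    (hgm.aemeasurable.pow_const _).aestronglyMeasurable
  rw [← integrable_norm_rpow_iff hm (by simpa using ht) ENNReal.ofReal_ne_top,
    ENNReal.toReal_ofReal (inv_nonneg.2 ht.le)]
  refine hgp.congr ?_
  filter_upwards [hg] with x hx
  rw [Real.norm_of_nonneg (Real.rpow_nonneg hx _), ← Real.rpow_mul hx]
  field_simp

theorem integral_rpow_interpolate_le (hg : 0 ≤ᵐ[μ] g)
    (hgm : AEStronglyMeasurable g μ) {p q θ : ℝ} (hp : 0 ≤ p) (hq : 0 ≤ q) (hθ₀ : 0 ≤ θ)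
    (hθ₁ : θ ≤ 1) (hgp : Integrable (fun x => g x ^ p) μ)
    (hgq : Integrable (fun x => g x ^ q) μ) :
    ∫ x, g x ^ (θ * p + (1 - θ) * q) ∂μ ≤
      (∫ x, g x ^ p ∂μ) ^ θ * (∫ x, g x ^ q ∂μ) ^ (1 - θ) := by
  rcases hθ₀.eq_or_lt with rfl | hθ₀
  · simp
  rcases hθ₁.eq_or_lt with rfl | hθ₁
  · simp
  have hθ' : 0 < 1 - θ := sub_pos.2 hθ₁
  have holder := integral_mul_le_Lp_mul_Lq_of_nonneg
    (Real.HolderConjugate.inv_one_sub_inv hθ₀ hθ₁)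
    (hg.mono fun x hx => Real.rpow_nonneg hx (θ * p))
    (hg.mono fun x hx => Real.rpow_nonneg hx ((1 - θ) * q))
    (memLp_rpow_mul_of_integrable_rpow hg hgm hθ₀ hgp)
    (memLp_rpow_mul_of_integrable_rpow hg hgm hθ' hgq)
  have rpow_rpow_inv : ∀ {t r : ℝ}, t ≠ 0 →
      ∫ x, (g x ^ (t * r)) ^ t⁻¹ ∂μ = ∫ x, g x ^ r ∂μ := fun {t r} ht =>
    integral_congr_ae <| hg.mono fun x hx => by
      dsimp only
      rw [← Real.rpow_mul hx, mul_right_comm, mul_inv_cancel₀ ht, one_mul]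
  have rpow_add : ∫ x, g x ^ (θ * p + (1 - θ) * q) ∂μ =
      ∫ x, g x ^ (θ * p) * g x ^ ((1 - θ) * q) ∂μ :=
    integral_congr_ae <| hg.mono fun x hx =>
      Real.rpow_add_of_nonneg hx (by positivity) (by positivity)
  simpa only [one_div, inv_inv, rpow_rpow_inv hθ₀.ne', rpow_rpow_inv hθ'.ne', ← rpow_add]
    using holder

end Interpolation

section CondExp

variable {α : Type*} {m : MeasurableSpace α} [m₀ : MeasurableSpace α] {μ : Measure α}
  {f : α → ℝ}

theorem integrable_condExp_rpow {p : ℝ} (hp : 1 ≤ p)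
    (hfp : Integrable (fun x => ‖f x‖ ^ p) μ) : Integrable (fun x => μ[f|m] x ^ p) μ := by
  refine (integrable_condExp (m := m) (f := fun x => ‖f x‖ ^ p)).mono'
    ((integrable_condExp (m := m) (f := f)).aemeasurable.pow_const p).aestronglyMeasurable ?_
  filter_upwards [Integrable.norm_condExp_rpow_le (m := m) hp hfp] with x hx
  exact (Real.abs_rpow_le_abs_rpow _ _).trans hx

theorem integral_condExp_rpow_interpolate_le (hm : m ≤ m₀) [SigmaFinite (μ.trim hm)]
    (hf : 0 ≤ᵐ[μ] f) {p θ : ℝ} (hp : 1 ≤ p) (hθ₀ : 0 ≤ θ) (hθ₁ : θ ≤ 1)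
    (hfp : Integrable (fun x => f x ^ p) μ) :
    ∫ x, μ[f|m] x ^ (θ * p + (1 - θ)) ∂μ ≤
      (∫ x, μ[f|m] x ^ p ∂μ) ^ θ * (∫ x, f x ∂μ) ^ (1 - θ) := by
  have hfp' : Integrable (fun x => ‖f x‖ ^ p) μ :=
    hfp.congr (hf.mono fun x hx => by simp only [Real.norm_of_nonneg hx])
  have h := integral_rpow_interpolate_le (condExp_nonneg hf)
    integrable_condExp.aestronglyMeasurable (zero_le_one.trans hp) zero_le_one hθ₀ hθ₁
    (integrable_condExp_rpow hp hfp')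
    (by simpa only [Real.rpow_one] using integrable_condExp (m := m))
  simpa only [mul_one, Real.rpow_one, integral_condExp hm] using h

end CondExp

theorem sigmaOf_le {Ω S ι : Type*} [mΩ : MeasurableSpace Ω] [MeasurableSpace S]
    {X : ι → Ω → S} (hX : ∀ i, Measurable (X i)) (I : ι → Prop) : sigmaOf X I ≤ mΩ :=
  iSup_le fun i => iSup_le fun _ => (hX i).comap_le

theorem rpow_mul_le_rpow_mul_rpow_of_le {N s θ A c I : ℝ} (j m : ℝ) (hN : 0 < N)
    (hs : 0 < s) (hθ : θ * (2 * s) + (1 - θ) = s) (hA : 0 ≤ A) (hc : 0 ≤ c)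
    (hI : I ≤ A ^ θ * c ^ (1 - θ)) :
    N ^ (j + s * (m - j)) * I ≤
      (N ^ (j + 2 * s * (m - j)) * A) ^ θ *
        (N ^ (2 * s * m) * c ^ (2 * s)) ^ ((1 - θ) / (2 * s)) := by
  have hexp :
      j + s * (m - j) = (j + 2 * s * (m - j)) * θ + 2 * s * m * ((1 - θ) / (2 * s)) := by
    field_simp
    linear_combination (j - m) * hθ
  have hc_exp : 2 * s * ((1 - θ) / (2 * s)) = 1 - θ := by field_simp
  rw [Real.mul_rpow (by positivity) hA, Real.mul_rpow (by positivity) (by positivity),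
    ← Real.rpow_mul hN.le, ← Real.rpow_mul hN.le, ← Real.rpow_mul hc, hc_exp, hexp,
    Real.rpow_add hN]
  calc N ^ ((j + 2 * s * (m - j)) * θ) * N ^ (2 * s * m * ((1 - θ) / (2 * s))) * I
      ≤ N ^ ((j + 2 * s * (m - j)) * θ) * N ^ (2 * s * m * ((1 - θ) / (2 * s))) *
          (A ^ θ * c ^ (1 - θ)) := by gcongr
    _ = _ := by ring

theorem mul_le_max_of_le_rpow_mul_rpow {P Q A A' C θ γ : ℝ} (hQ₀ : 0 ≤ Q) (hA : 0 ≤ A)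
    (hA' : 0 ≤ A') (hC : 0 ≤ C) (hθ : 0 ≤ θ) (hγ : 0 ≤ γ) (hθγ : 2 * θ + 2 * γ = 1)
    (hP : P ≤ A ^ θ * C ^ γ) (hQ : Q ≤ A' ^ θ * C ^ γ) : P * Q ≤ max A (max A' C) :=
  calc P * Q ≤ (A ^ θ * C ^ γ) * (A' ^ θ * C ^ γ) :=
        mul_le_mul hP hQ hQ₀ (by positivity)
    _ = A ^ θ * A' ^ θ * C ^ (γ + γ) := by rw [Real.rpow_add_of_nonneg hC hγ hγ]; ring
    _ ≤ max A (max A' C) :=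
        Real.rpow_mul_rpow_mul_rpow_le_max hA hA' hC hθ hθ (by positivity) (by linarith)

theorem ineq7_conditional_moment_products_general (s : ℝ) (m : ℕ) (hs : 1 ≤ s) :
    ∃ B : ℝ, 0 < B ∧
      ∀ (Ω S : Type) (_ : MeasurableSpace Ω) (_ : MeasurableSpace S)
        (μ : Measure Ω) (_ : IsProbabilityMeasure μ)
        (X : Fin m → Ω → S)
        (_ : ∀ i, Measurable (X i))
        (_ : iIndepFun X μ)
        (_ : ∀ i j, Measure.map (X i) μ = Measure.map (X j) μ)
        (Y : (Fin m → S) → ℝ) (_ : Measurable Y) (_ : ∀ x, 0 ≤ Y x)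
        (_ : ∀ (π : Equiv.Perm (Fin m)) (x : Fin m → S), Y (x ∘ π) = Y x)
        (_ : Integrable (fun ω => (Y fun i => X i ω) ^ (2 * s)) μ)
        (k l : ℕ) (_ : k ≤ m) (_ : l ≤ m) (n : ℕ) (_ : 1 ≤ n),
        (n : ℝ) ^ ((k : ℝ) + l + s * (2 * (m : ℝ) - k - l)) *
            (∫ ω, (condExp (sigmaOf X (fun i => (i : ℕ) < k)) μ
                (fun ω' => Y fun i => X i ω') ω) ^ s ∂μ) *
            (∫ ω, (condExp (sigmaOf X (fun i => (i : ℕ) < l)) μ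
                (fun ω' => Y fun i => X i ω') ω) ^ s ∂μ)
          ≤ B * max ((n : ℝ) ^ ((k : ℝ) + 2 * s * ((m : ℝ) - k)) *
                ∫ ω, (condExp (sigmaOf X (fun i => (i : ℕ) < k)) μ
                    (fun ω' => Y fun i => X i ω') ω) ^ (2 * s) ∂μ)
              (max ((n : ℝ) ^ ((l : ℝ) + 2 * s * ((m : ℝ) - l)) *
                  ∫ ω, (condExp (sigmaOf X (fun i => (i : ℕ) < l)) μ
                      (fun ω' => Y fun i => X i ω') ω) ^ (2 * s) ∂μ)
                ((n : ℝ) ^ (2 * s * (m : ℝ)) *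
                  (∫ ω, (Y fun i => X i ω) ∂μ) ^ (2 * s))) := by
  refine ⟨1, one_pos, fun Ω S _ _ μ _ X hX _ _ Y _ hY₀ _ hY k l _ _ n hn => ?_⟩
  set θ := (s - 1) / (2 * s - 1)
  have h2s : 0 < 2 * s - 1 := by linarith
  have hθ : θ * (2 * s) + (1 - θ) = s := by
    linarith [div_mul_cancel₀ (s - 1) h2s.ne']
  have hθ₀ : 0 ≤ θ := div_nonneg (by linarith) h2s.le
  have hθ₁ : θ ≤ 1 := (div_le_one h2s).2 (by linarith)
  have hN : (0 : ℝ) < n := by exact_mod_cast hn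
  have hf₀ : 0 ≤ᵐ[μ] fun ω => Y fun i => X i ω := ae_of_all _ fun ω => hY₀ _
  have mean_nonneg : 0 ≤ ∫ ω, (Y fun i => X i ω) ∂μ := integral_nonneg fun ω => hY₀ _
  have moment_nonneg : ∀ (j : ℕ) (p : ℝ), 0 ≤ ∫ ω, (condExp (sigmaOf X (fun i => (i : ℕ) < j))
      μ (fun ω' => Y fun i => X i ω') ω) ^ p ∂μ := fun j p =>
    integral_nonneg_of_ae <| (condExp_nonneg hf₀).mono fun ω h => Real.rpow_nonneg h p
  have bound (j : ℕ) := rpow_mul_le_rpow_mul_rpow_of_le j m hN (by linarith) hθ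
    (moment_nonneg j (2 * s)) mean_nonneg
    (hθ ▸ integral_condExp_rpow_interpolate_le (sigmaOf_le hX _) hf₀ (by linarith) hθ₀ hθ₁ hY)
  rw [one_mul, show (k : ℝ) + l + s * (2 * m - k - l) = (k + s * (m - k)) + (l + s * (m - l)) by
    ring, Real.rpow_add hN]
  refine (Eq.le (by ring)).trans <| mul_le_max_of_le_rpow_mul_rpow
    (by positivity [moment_nonneg l s]) (by positivity [moment_nonneg k (2 * s)])
    (by positivity [moment_nonneg l (2 * s)]) (by positivity [mean_nonneg]) hθ₀ (by positivity)
    (by field_simp; linarith) (bound k) (bound l)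

/-- Inequality (7): a consequence of Lemma 2 for conditional moments of a
nonnegative symmetric kernel. -/
theorem ineq7_conditional_moment_products (s : ℝ) (m : ℕ) (hs : 1 ≤ s) (hm : 1 ≤ m) :
    ∃ B : ℝ, 0 < B ∧
      ∀ (Ω S : Type) (_ : MeasurableSpace Ω) (_ : MeasurableSpace S)
        (μ : Measure Ω) (_ : IsProbabilityMeasure μ)
        (X : Fin m → Ω → S)
        (_ : ∀ i, Measurable (X i))
        (_ : iIndepFun X μ)
        (_ : ∀ i j, Measure.map (X i) μ = Measure.map (X j) μ)
        (Y : (Fin m → S) → ℝ) (_ : Measurable Y) (_ : ∀ x, 0 ≤ Y x)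
        (_ : ∀ (π : Equiv.Perm (Fin m)) (x : Fin m → S), Y (x ∘ π) = Y x)
        (_ : Integrable (fun ω => (Y fun i => X i ω) ^ (2 * s)) μ)
        (k l : ℕ) (_ : k ≤ m) (_ : l ≤ m) (n : ℕ) (_ : 1 ≤ n),
        (n : ℝ) ^ ((k : ℝ) + l + s * (2 * (m : ℝ) - k - l)) *
            (∫ ω, (condExp (sigmaOf X (fun i => (i : ℕ) < k)) μ
                (fun ω' => Y fun i => X i ω') ω) ^ s ∂μ) *
            (∫ ω, (condExp (sigmaOf X (fun i => (i : ℕ) < l)) μ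
                (fun ω' => Y fun i => X i ω') ω) ^ s ∂μ)
          ≤ B * max ((n : ℝ) ^ ((k : ℝ) + 2 * s * ((m : ℝ) - k)) *
                ∫ ω, (condExp (sigmaOf X (fun i => (i : ℕ) < k)) μ
                    (fun ω' => Y fun i => X i ω') ω) ^ (2 * s) ∂μ)
              (max ((n : ℝ) ^ ((l : ℝ) + 2 * s * ((m : ℝ) - l)) *
                  ∫ ω, (condExp (sigmaOf X (fun i => (i : ℕ) < l)) μ
                      (fun ω' => Y fun i => X i ω') ω) ^ (2 * s) ∂μ)
                ((n : ℝ) ^ (2 * s * (m : ℝ)) *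
                  (∫ ω, (Y fun i => X i ω) ∂μ) ^ (2 * s))) :=
  ineq7_conditional_moment_products_general s m hs
end

section
/- Let X_1,...,X_n be i.i.d. nonnegative random variables with E[X_1^p] < ∞, p ≥ 1. Then A(p) · max( n^p (E[X_1])^p, n · E[X_1^p] ) ≤ E[(Σ_{k=1}^n X_k)^p] ≤ B(p) · max( n^p (E[X_1])^p, n · E[X_1^p] ) for constants A(p), B(p) > 0 depending only on p. -/
/-!
Write `S = ∑ Xᵢ`. The lower bound is Jensen, `(𝔼 S)^p ≤ 𝔼 S^p`, together with the
superadditivity `∑ Xᵢ^p ≤ S^p` of `x ↦ x^p`.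

For the upper bound write `S^p = ∑ Xᵢ S^(p-1)` and `S = Xᵢ + Sᵢ`, where `Sᵢ = ∑_{j ≠ i} Xⱼ` is
independent of `Xᵢ`. Splitting `(Xᵢ + Sᵢ)^(p-1) ≤ 2^(p-1) (Xᵢ^(p-1) + Sᵢ^(p-1))` and factoring
`𝔼[Xᵢ Sᵢ^(p-1)] = 𝔼 Xᵢ 𝔼 Sᵢ^(p-1)` gives `T ≤ 2^(p-1) n (𝔼 X^p + 𝔼 X · 𝔼 S^(p-1))` for
`T = 𝔼 S^p`, and concave Jensen bounds `𝔼 S^(p-1) ≤ T^(1 - 1/p)`. An inequality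
`T ≤ a + b T^(1 - 1/p)` forces `T ≤ 2a + (2b)^p`, so `A = 1` and `B = 2^p + (2^p)^p` work.
-/

open MeasureTheory ProbabilityTheory Finset

namespace Real

lemma self_mul_rpow_sub_one {x p : ℝ} (hx : 0 ≤ x) (hp : p ≠ 0) : x * x ^ (p - 1) = x ^ p := by
  conv_rhs => rw [show p = 1 + (p - 1) by ring, rpow_add' hx (by simpa using hp), rpow_one]

lemma rpow_le_one_add_rpow {x q p : ℝ} (hx : 0 ≤ x) (hq : 0 ≤ q) (hqp : q ≤ p) :
    x ^ q ≤ 1 + x ^ p := by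
  rcases le_total x 1 with h | h
  · linarith [rpow_le_one hx h hq, rpow_nonneg hx p]
  · linarith [rpow_le_rpow_of_exponent_le h hqp]

lemma add_rpow_le_two_rpow_mul {a b q : ℝ} (ha : 0 ≤ a) (hb : 0 ≤ b) (hq : 0 ≤ q) :
    (a + b) ^ q ≤ 2 ^ q * (a ^ q + b ^ q) := by
  have hmax : max a b ^ q ≤ a ^ q + b ^ q := by
    rcases le_total a b with h | h
    · simpa [max_eq_right h] using rpow_nonneg ha q
    · simpa [max_eq_left h] using rpow_nonneg hb q
  calc (a + b) ^ q ≤ (2 * max a b) ^ q := by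
        gcongr
        linarith [le_max_left a b, le_max_right a b]
    _ = 2 ^ q * max a b ^ q := mul_rpow zero_le_two (le_max_of_le_left ha)
    _ ≤ 2 ^ q * (a ^ q + b ^ q) := by gcongr

lemma sum_rpow_le_rpow_sum {ι : Type*} (s : Finset ι) {x : ι → ℝ} (hx : ∀ i, 0 ≤ x i) {p : ℝ}
    (hp : 1 ≤ p) : ∑ i ∈ s, x i ^ p ≤ (∑ i ∈ s, x i) ^ p := by
  classical
  induction s using Finset.induction_on with
  | empty => simp [zero_rpow (by positivity : p ≠ 0)]
  | insert a s ha ih =>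
    rw [sum_insert ha, sum_insert ha]
    calc x a ^ p + ∑ i ∈ s, x i ^ p ≤ x a ^ p + (∑ i ∈ s, x i) ^ p := by gcongr
      _ ≤ (x a + ∑ i ∈ s, x i) ^ p :=
        add_rpow_le_rpow_add (hx a) (sum_nonneg fun i _ => hx i) hp

lemma rpow_sum_le_two_rpow_mul_sum {ι : Type*} [Fintype ι] [DecidableEq ι] {x : ι → ℝ}
    (hx : ∀ i, 0 ≤ x i) {p : ℝ} (hp : 1 ≤ p) :
    (∑ i, x i) ^ p ≤
      2 ^ (p - 1) * ∑ i, (x i ^ p + x i * (∑ j ∈ univ.erase i, x j) ^ (p - 1)) := by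
  have hp0 : p ≠ 0 := by positivity
  rw [← self_mul_rpow_sub_one (sum_nonneg fun i _ => hx i) hp0, sum_mul, mul_sum]
  refine sum_le_sum fun i _ => ?_
  have hR : 0 ≤ ∑ j ∈ univ.erase i, x j := sum_nonneg fun j _ => hx j
  calc x i * (∑ j, x j) ^ (p - 1)
      = x i * (x i + ∑ j ∈ univ.erase i, x j) ^ (p - 1) := by rw [add_sum_erase _ _ (mem_univ i)]
    _ ≤ x i * (2 ^ (p - 1) * (x i ^ (p - 1) + (∑ j ∈ univ.erase i, x j) ^ (p - 1))) := by
      gcongr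
      · exact hx i
      · exact add_rpow_le_two_rpow_mul (hx i) hR (by linarith)
    _ = 2 ^ (p - 1) * (x i ^ p + x i * (∑ j ∈ univ.erase i, x j) ^ (p - 1)) := by
      rw [← self_mul_rpow_sub_one (hx i) hp0]; ring

lemma le_two_mul_add_two_mul_rpow {T a b p : ℝ} (hT : 0 ≤ T) (ha : 0 ≤ a) (hb : 0 ≤ b)
    (hp : 1 ≤ p) (h : T ≤ a + b * T ^ (1 - p⁻¹)) : T ≤ 2 * a + (2 * b) ^ p := by
  rcases le_or_gt T (2 * a) with hTa | hTa
  · linarith [rpow_nonneg (by positivity : (0:ℝ) ≤ 2 * b) p]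
  have hT0 : 0 < T := by linarith
  have hp0 : p ≠ 0 := by positivity
  set u := T ^ p⁻¹
  have hu0 : 0 < u := rpow_pos_of_pos hT0 _
  have hsplit : T ^ (1 - p⁻¹) = T / u := by rw [rpow_sub hT0, rpow_one]
  have hu2b : u < 2 * b := by
    rw [hsplit] at h
    have hcancel : b * (T / u) * u = b * T := by field_simp
    have : u * T < 2 * b * T := by nlinarith
    exact lt_of_mul_lt_mul_right this hT
  calc T = u ^ p := (rpow_inv_rpow hT hp0).symm
    _ ≤ (2 * b) ^ p := rpow_le_rpow hu0.le hu2b.le (by linarith)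
    _ ≤ 2 * a + (2 * b) ^ p := by linarith

end Real

section Moments

variable {Ω ι : Type*} [MeasurableSpace Ω] {μ : Measure Ω} {p : ℝ}

lemma integrable_rpow_of_le [IsFiniteMeasure μ] {f : Ω → ℝ} (hf : Measurable f)
    (hf0 : ∀ ω, 0 ≤ f ω) (hfp : Integrable (fun ω => f ω ^ p) μ) {q : ℝ} (hq : 0 ≤ q)
    (hqp : q ≤ p) : Integrable (fun ω => f ω ^ q) μ :=
  integrable_of_le_of_le (g₁ := 0) (hf.pow_const q).aestronglyMeasurable
    (ae_of_all _ fun ω => Real.rpow_nonneg (hf0 ω) q)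
    (ae_of_all _ fun ω => Real.rpow_le_one_add_rpow (hf0 ω) hq hqp)
    (integrable_zero _ _ _) ((integrable_const 1).add hfp)

lemma integrable_of_integrable_rpow [IsFiniteMeasure μ] {f : Ω → ℝ} (hf : Measurable f)
    (hf0 : ∀ ω, 0 ≤ f ω) (hfp : Integrable (fun ω => f ω ^ p) μ) (hp : 1 ≤ p) :
    Integrable f μ := by
  simpa only [Real.rpow_one] using integrable_rpow_of_le hf hf0 hfp zero_le_one hp

lemma integrable_rpow_sum (s : Finset ι) {X : ι → Ω → ℝ} (hXm : ∀ i, Measurable (X i))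
    (hX0 : ∀ i ω, 0 ≤ X i ω) (hXp : ∀ i, Integrable (fun ω => X i ω ^ p) μ) (hp : 1 ≤ p) :
    Integrable (fun ω => (∑ i ∈ s, X i ω) ^ p) μ :=
  integrable_of_le_of_le (g₁ := 0)
    ((Finset.measurable_sum s fun i _ => hXm i).pow_const p).aestronglyMeasurable
    (ae_of_all _ fun ω => Real.rpow_nonneg (sum_nonneg fun i _ => hX0 i ω) p)
    (ae_of_all _ fun ω =>
      Real.rpow_sum_le_const_mul_sum_rpow_of_nonneg s hp fun i _ => hX0 i ω)
    (integrable_zero _ _ _) ((integrable_finsetSum s fun i _ => hXp i).const_mul _)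

lemma rpow_integral_le_integral_rpow [IsProbabilityMeasure μ] {f : Ω → ℝ} (hf0 : ∀ ω, 0 ≤ f ω)
    (hf : Integrable f μ) (hfp : Integrable (fun ω => f ω ^ p) μ) (hp : 1 ≤ p) :
    (∫ ω, f ω ∂μ) ^ p ≤ ∫ ω, f ω ^ p ∂μ :=
  (convexOn_rpow hp).map_integral_le (Real.continuous_rpow_const (by linarith)).continuousOn
    isClosed_Ici (ae_of_all _ hf0) hf hfp

lemma integral_rpow_sub_one_le [IsProbabilityMeasure μ] {f : Ω → ℝ} (hf : Measurable f)
    (hf0 : ∀ ω, 0 ≤ f ω) (hfp : Integrable (fun ω => f ω ^ p) μ) (hp : 1 ≤ p) :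
    ∫ ω, f ω ^ (p - 1) ∂μ ≤ (∫ ω, f ω ^ p ∂μ) ^ (1 - p⁻¹) := by
  have hr0 : 0 ≤ 1 - p⁻¹ := sub_nonneg.2 (inv_le_one_of_one_le₀ hp)
  have hr1 : 1 - p⁻¹ ≤ 1 := sub_le_self _ (by positivity)
  have hpow : ∀ ω, (f ω ^ p) ^ (1 - p⁻¹) = f ω ^ (p - 1) := fun ω => by
    rw [← Real.rpow_mul (hf0 ω)]
    congr 1
    field_simp
  have hint : Integrable (fun ω => f ω ^ (p - 1)) μ :=
    integrable_rpow_of_le hf hf0 hfp (by linarith) (by linarith)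
  have := (Real.concaveOn_rpow hr0 hr1).le_map_integral
    (Real.continuous_rpow_const hr0).continuousOn isClosed_Ici
    (ae_of_all _ fun ω => Real.rpow_nonneg (hf0 ω) p) hfp
    (by simpa only [Function.comp_def, hpow] using hint)
  simpa only [hpow] using this

lemma sum_integral_rpow_le_integral_rpow_sum [Fintype ι] {X : ι → Ω → ℝ} (hX0 : ∀ i ω, 0 ≤ X i ω)
    (hXp : ∀ i, Integrable (fun ω => X i ω ^ p) μ)
    (hSp : Integrable (fun ω => (∑ i, X i ω) ^ p) μ) (hp : 1 ≤ p) :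
    ∑ i, ∫ ω, X i ω ^ p ∂μ ≤ ∫ ω, (∑ i, X i ω) ^ p ∂μ := by
  rw [← integral_finsetSum _ fun i _ => hXp i]
  exact integral_mono (integrable_finsetSum _ fun i _ => hXp i) hSp
    fun ω => Real.sum_rpow_le_rpow_sum _ (fun i => hX0 i ω) hp

lemma ProbabilityTheory.iIndepFun.indepFun_rpow_sum_erase [Fintype ι] [DecidableEq ι]
    {X : ι → Ω → ℝ} (hXm : ∀ i, Measurable (X i)) (hX : iIndepFun X μ) (i : ι) (q : ℝ) :
    IndepFun (X i) (fun ω => (∑ j ∈ univ.erase i, X j ω) ^ q) μ := by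
  have h := (hX.indepFun_finsetSum_of_notMem hXm (notMem_erase i univ)).symm
  simpa only [Function.comp_def, Finset.sum_apply, id] using
    h.comp measurable_id (measurable_id.pow_const q)

lemma integral_rpow_sub_one_sum_le [IsProbabilityMeasure μ] [Fintype ι] (s : Finset ι)
    {X : ι → Ω → ℝ} (hXm : ∀ i, Measurable (X i)) (hX0 : ∀ i ω, 0 ≤ X i ω)
    (hXp : ∀ i, Integrable (fun ω => X i ω ^ p) μ) (hp : 1 ≤ p) :
    ∫ ω, (∑ j ∈ s, X j ω) ^ (p - 1) ∂μ ≤ (∫ ω, (∑ j, X j ω) ^ p ∂μ) ^ (1 - p⁻¹) := by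
  have hsum_m : Measurable fun ω => ∑ j, X j ω := Finset.measurable_sum _ fun j _ => hXm j
  have hsum_0 : ∀ (s : Finset ι) ω, 0 ≤ ∑ j ∈ s, X j ω := fun s ω => sum_nonneg fun j _ => hX0 j ω
  have hSp := integrable_rpow_sum univ hXm hX0 hXp hp
  calc ∫ ω, (∑ j ∈ s, X j ω) ^ (p - 1) ∂μ
      ≤ ∫ ω, (∑ j, X j ω) ^ (p - 1) ∂μ :=
        integral_mono_of_nonneg (ae_of_all _ fun ω => Real.rpow_nonneg (hsum_0 s ω) _)
          (integrable_rpow_of_le hsum_m (hsum_0 univ) hSp (by linarith) (by linarith))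
          (ae_of_all _ fun ω => Real.rpow_le_rpow (hsum_0 s ω)
            (sum_le_sum_of_subset_of_nonneg (subset_univ s) fun j _ _ => hX0 j ω) (by linarith))
    _ ≤ _ := integral_rpow_sub_one_le hsum_m (hsum_0 univ) hSp hp

lemma integral_rpow_sum_le [IsProbabilityMeasure μ] [Fintype ι] {X : ι → Ω → ℝ}
    (hXm : ∀ i, Measurable (X i)) (hX : iIndepFun X μ) (hX0 : ∀ i ω, 0 ≤ X i ω)
    (hXp : ∀ i, Integrable (fun ω => X i ω ^ p) μ) (hp : 1 ≤ p) :
    ∫ ω, (∑ i, X i ω) ^ p ∂μ ≤ 2 ^ (p - 1) *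
      ∑ i, (∫ ω, X i ω ^ p ∂μ + (∫ ω, X i ω ∂μ) * (∫ ω, (∑ i, X i ω) ^ p ∂μ) ^ (1 - p⁻¹)) := by
  classical
  have hsum_m : ∀ s : Finset ι, Measurable fun ω => ∑ j ∈ s, X j ω :=
    fun s => Finset.measurable_sum s fun j _ => hXm j
  have hsum_0 : ∀ (s : Finset ι) ω, 0 ≤ ∑ j ∈ s, X j ω := fun s ω => sum_nonneg fun j _ => hX0 j ω
  have hsum_q : ∀ s : Finset ι, Integrable (fun ω => (∑ j ∈ s, X j ω) ^ (p - 1)) μ := fun s =>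
    integrable_rpow_of_le (hsum_m s) (hsum_0 s) (integrable_rpow_sum s hXm hX0 hXp hp)
      (by linarith) (by linarith)
  have hXi : ∀ i, Integrable (X i) μ :=
    fun i => integrable_of_integrable_rpow (hXm i) (hX0 i) (hXp i) hp
  have hindep := hX.indepFun_rpow_sum_erase hXm (q := p - 1)
  have hprod : ∀ i, Integrable (fun ω => X i ω * (∑ j ∈ univ.erase i, X j ω) ^ (p - 1)) μ :=
    fun i => (hindep i).integrable_mul (hXi i) (hsum_q _)
  have hsummand : ∀ i, Integrable
      (fun ω => X i ω ^ p + X i ω * (∑ j ∈ univ.erase i, X j ω) ^ (p - 1)) μ :=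
    fun i => (hXp i).add (hprod i)
  calc ∫ ω, (∑ i, X i ω) ^ p ∂μ
      ≤ ∫ ω, 2 ^ (p - 1) *
          ∑ i, (X i ω ^ p + X i ω * (∑ j ∈ univ.erase i, X j ω) ^ (p - 1)) ∂μ :=
        integral_mono_of_nonneg (ae_of_all _ fun ω => Real.rpow_nonneg (hsum_0 _ ω) _)
          ((integrable_finsetSum _ fun i _ => hsummand i).const_mul _)
          (ae_of_all _ fun ω => Real.rpow_sum_le_two_rpow_mul_sum (fun i => hX0 i ω) hp)
    _ = 2 ^ (p - 1) * ∑ i, (∫ ω, X i ω ^ p ∂μ +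
          (∫ ω, X i ω ∂μ) * ∫ ω, (∑ j ∈ univ.erase i, X j ω) ^ (p - 1) ∂μ) := by
        rw [integral_const_mul, integral_finsetSum _ fun i _ => hsummand i]
        congr 1
        refine sum_congr rfl fun i _ => ?_
        rw [integral_add (hXp i) (hprod i),
          (hindep i).integral_fun_mul_eq_mul_integral (hXi i).aestronglyMeasurable
            (hsum_q _).aestronglyMeasurable]
    _ ≤ _ := by
        gcongr with i
        · exact integral_nonneg (hX0 i)
        · exact integral_rpow_sub_one_sum_le _ hXm hX0 hXp hp

lemma ProbabilityTheory.IdentDistrib.integral_rpow_eq {Ω' : Type*} [MeasurableSpace Ω']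
    {ν : Measure Ω'} {f : Ω → ℝ} {g : Ω' → ℝ} (h : IdentDistrib f g μ ν) (p : ℝ) :
    ∫ ω, f ω ^ p ∂μ = ∫ ω, g ω ^ p ∂ν :=
  (h.comp (measurable_id.pow_const p)).integral_eq

lemma ProbabilityTheory.IdentDistrib.integrable_rpow_iff {Ω' : Type*} [MeasurableSpace Ω']
    {ν : Measure Ω'} {f : Ω → ℝ} {g : Ω' → ℝ} (h : IdentDistrib f g μ ν) (p : ℝ) :
    Integrable (fun ω => f ω ^ p) μ ↔ Integrable (fun ω => g ω ^ p) ν :=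
  (h.comp (measurable_id.pow_const p)).integrable_iff

section IdentDistrib

variable [IsProbabilityMeasure μ] [Fintype ι] {X : ι → Ω → ℝ} {i₀ : ι}

lemma max_le_integral_rpow_sum_of_identDistrib (hXm : ∀ i, Measurable (X i))
    (hident : ∀ i, IdentDistrib (X i) (X i₀) μ μ) (hX0 : ∀ i ω, 0 ≤ X i ω)
    (hXp : Integrable (fun ω => X i₀ ω ^ p) μ) (hp : 1 ≤ p) :
    max ((Fintype.card ι : ℝ) ^ p * (∫ ω, X i₀ ω ∂μ) ^ p)
        ((Fintype.card ι : ℝ) * ∫ ω, X i₀ ω ^ p ∂μ)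
      ≤ ∫ ω, (∑ i, X i ω) ^ p ∂μ := by
  have hXp' : ∀ i, Integrable (fun ω => X i ω ^ p) μ :=
    fun i => ((hident i).integrable_rpow_iff p).2 hXp
  have hXi : ∀ i, Integrable (X i) μ :=
    fun i => integrable_of_integrable_rpow (hXm i) (hX0 i) (hXp' i) hp
  have hSp := integrable_rpow_sum univ hXm hX0 hXp' hp
  refine max_le ?_ ?_
  · have hmean : ∫ ω, ∑ i, X i ω ∂μ = Fintype.card ι * ∫ ω, X i₀ ω ∂μ := by
      rw [integral_finsetSum _ fun i _ => hXi i, sum_congr rfl fun i _ => (hident i).integral_eq,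
        sum_const, card_univ, nsmul_eq_mul]
    rw [← Real.mul_rpow (Nat.cast_nonneg _) (integral_nonneg (hX0 i₀)), ← hmean]
    exact rpow_integral_le_integral_rpow (fun ω => sum_nonneg fun i _ => hX0 i ω)
      (integrable_finsetSum _ fun i _ => hXi i) hSp hp
  · calc (Fintype.card ι : ℝ) * ∫ ω, X i₀ ω ^ p ∂μ = ∑ i, ∫ ω, X i ω ^ p ∂μ := by
          rw [sum_congr rfl fun i _ => (hident i).integral_rpow_eq p, sum_const,
            card_univ, nsmul_eq_mul]
      _ ≤ _ := sum_integral_rpow_le_integral_rpow_sum hX0 hXp' hSp hp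

lemma integral_rpow_sum_le_of_identDistrib (hXm : ∀ i, Measurable (X i)) (hX : iIndepFun X μ)
    (hident : ∀ i, IdentDistrib (X i) (X i₀) μ μ) (hX0 : ∀ i ω, 0 ≤ X i ω)
    (hXp : Integrable (fun ω => X i₀ ω ^ p) μ) (hp : 1 ≤ p) :
    ∫ ω, (∑ i, X i ω) ^ p ∂μ ≤ (2 ^ p + (2 ^ p) ^ p) *
      max ((Fintype.card ι : ℝ) ^ p * (∫ ω, X i₀ ω ∂μ) ^ p)
        ((Fintype.card ι : ℝ) * ∫ ω, X i₀ ω ^ p ∂μ) := by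
  set N : ℝ := (Fintype.card ι : ℝ)
  set e := ∫ ω, X i₀ ω ∂μ
  set ep := ∫ ω, X i₀ ω ^ p ∂μ
  set T := ∫ ω, (∑ i, X i ω) ^ p ∂μ
  have hXp' : ∀ i, Integrable (fun ω => X i ω ^ p) μ :=
    fun i => ((hident i).integrable_rpow_iff p).2 hXp
  have he : 0 ≤ e := integral_nonneg (hX0 i₀)
  have hep : 0 ≤ ep := integral_nonneg fun ω => Real.rpow_nonneg (hX0 i₀ ω) p
  have h2 : (2 : ℝ) * 2 ^ (p - 1) = 2 ^ p := by
    rw [Real.rpow_sub two_pos, Real.rpow_one]; ring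
  have hrec : T ≤ 2 ^ (p - 1) * (N * ep) + 2 ^ (p - 1) * (N * e) * T ^ (1 - p⁻¹) := by
    have := integral_rpow_sum_le hXm hX hX0 hXp' hp
    rw [sum_congr rfl fun i _ => by
      rw [(hident i).integral_rpow_eq p, (hident i).integral_eq], sum_const, card_univ,
      nsmul_eq_mul] at this
    linarith
  have hT_le := Real.le_two_mul_add_two_mul_rpow (integral_nonneg fun ω =>
    Real.rpow_nonneg (sum_nonneg fun i _ => hX0 i ω) p) (by positivity) (by positivity) hp hrec
  have hb : (2 * (2 ^ (p - 1) * (N * e))) ^ p = (2 ^ p) ^ p * (N ^ p * e ^ p) := by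
    rw [← mul_assoc, h2, Real.mul_rpow (by positivity) (by positivity),
      Real.mul_rpow (by positivity) he]
  have hM1 : N ^ p * e ^ p ≤ max (N ^ p * e ^ p) (N * ep) := le_max_left _ _
  have hM2 : N * ep ≤ max (N ^ p * e ^ p) (N * ep) := le_max_right _ _
  calc T ≤ 2 * (2 ^ (p - 1) * (N * ep)) + (2 * (2 ^ (p - 1) * (N * e))) ^ p := hT_le
    _ = 2 ^ p * (N * ep) + (2 ^ p) ^ p * (N ^ p * e ^ p) := by rw [hb, ← h2]; ring
    _ ≤ _ := by nlinarith [Real.rpow_nonneg (zero_le_two (α := ℝ)) p,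
      Real.rpow_nonneg (Real.rpow_nonneg (zero_le_two (α := ℝ)) p) p]

end IdentDistrib

end Moments

/-- The `m = 1` case of Theorem 1: a two-sided Rosenthal-type bound for sums of
i.i.d. nonnegative random variables. -/
theorem theorem1_order_one (p : ℝ) (hp : 1 ≤ p) :
    ∃ A B : ℝ, 0 < A ∧ 0 < B ∧
      ∀ (Ω : Type) (_ : MeasurableSpace Ω)
        (μ : Measure Ω) (_ : IsProbabilityMeasure μ)
        (n : ℕ) (hn : 1 ≤ n) (X : Fin n → Ω → ℝ)
        (_ : ∀ i, Measurable (X i))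
        (_ : iIndepFun X μ)
        (_ : ∀ i j, Measure.map (X i) μ = Measure.map (X j) μ)
        (_ : ∀ i ω, 0 ≤ X i ω)
        (_ : Integrable (fun ω => X ⟨0, hn⟩ ω ^ p) μ),
        A * max ((n : ℝ) ^ p * (∫ ω, X ⟨0, hn⟩ ω ∂μ) ^ p)
            ((n : ℝ) * ∫ ω, X ⟨0, hn⟩ ω ^ p ∂μ)
          ≤ ∫ ω, (∑ k, X k ω) ^ p ∂μ ∧
        ∫ ω, (∑ k, X k ω) ^ p ∂μ
          ≤ B * max ((n : ℝ) ^ p * (∫ ω, X ⟨0, hn⟩ ω ∂μ) ^ p)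
              ((n : ℝ) * ∫ ω, X ⟨0, hn⟩ ω ^ p ∂μ) := by
  refine ⟨1, 2 ^ p + (2 ^ p) ^ p, one_pos, by positivity, ?_⟩
  intro Ω _ μ _ n hn X hXm hX hmap hX0 hXp
  have hident : ∀ i, IdentDistrib (X i) (X ⟨0, hn⟩) μ μ :=
    fun i => ⟨(hXm i).aemeasurable, (hXm _).aemeasurable, hmap i _⟩
  have lower := max_le_integral_rpow_sum_of_identDistrib hXm hident hX0 hXp hp
  have upper := integral_rpow_sum_le_of_identDistrib hXm hX hident hX0 hXp hp
  rw [Fintype.card_fin] at lower upper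
  exact ⟨by rwa [one_mul], upper⟩
end
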